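/- arXiv:1503.04704 — 3 statements merged into one kernel-verified Lean document; each statement's English description precedes it below -/
import Mathlib

section
/- Let d ≥ 2 with b_i > 1, c_{ii} > 0, c_{ij} ≥ 0 for i ≠ j, ∑_{j≠i} c_{ij} b_j/c_{jj} ≤ b_i − 1 for all i, and suppose the matrix C = (c_{ij}) is invertible. Then the Beverton-Holt map φ_i(x) = b_i x_i / (1 + ∑_j c_{ij} x_j) has exactly one fixed point in the open positive orthant, and it equals C^{-1}(b − 1) where b − 1 = (b_1 − 1, ..., b_d − 1). -/
-- abstract positivity lemma: if b_i s_i + ∑_{j≠i} a_{ij} s_j = b_i - 1 with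
-- a ≥ 0 off-diagonal row sums ≤ b_i - 1, b_i > 1, then s > 0.
theorem aux_pos (d : ℕ) [NeZero d] (b : Fin d → ℝ) (a : Fin d → Fin d → ℝ) (s : Fin d → ℝ)
    (hb : ∀ i, 1 < b i)
    (hann : ∀ i j, j ≠ i → 0 ≤ a i j)
    (hasum : ∀ i, ∑ j ∈ Finset.univ.erase i, a i j ≤ b i - 1)
    (heq : ∀ i, b i * s i + ∑ j ∈ Finset.univ.erase i, a i j * s j = b i - 1) :
    ∀ i, 0 < s i := by
  obtain ⟨k, -, hk⟩ := Finset.exists_max_image Finset.univ s ⟨0, Finset.mem_univ _⟩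
  obtain ⟨l, -, hl⟩ := Finset.exists_min_image Finset.univ s ⟨0, Finset.mem_univ _⟩
  set S := max (s k) 0 with hSdef
  set m' := min (s l) 0 with hmdef
  have hS0 : 0 ≤ S := le_max_right _ _
  have hm0' : m' ≤ 0 := min_le_right _ _
  have hsumU : ∀ i, ∑ j ∈ Finset.univ.erase i, a i j * s j ≤ (b i - 1) * S := by
    intro i
    calc ∑ j ∈ Finset.univ.erase i, a i j * s j
        ≤ ∑ j ∈ Finset.univ.erase i, a i j * S := by
          apply Finset.sum_le_sum
          intro j hj
          exact mul_le_mul_of_nonneg_left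
            ((hk j (Finset.mem_univ j)).trans (le_max_left _ _))
            (hann i j (Finset.ne_of_mem_erase hj))
      _ = (∑ j ∈ Finset.univ.erase i, a i j) * S := by rw [Finset.sum_mul]
      _ ≤ (b i - 1) * S := mul_le_mul_of_nonneg_right (hasum i) hS0
  have hsumL : ∀ i, (b i - 1) * m' ≤ ∑ j ∈ Finset.univ.erase i, a i j * s j := by
    intro i
    calc (b i - 1) * m' ≤ (∑ j ∈ Finset.univ.erase i, a i j) * m' :=
          mul_le_mul_of_nonpos_right (hasum i) hm0'
      _ = ∑ j ∈ Finset.univ.erase i, a i j * m' := by rw [Finset.sum_mul]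
      _ ≤ ∑ j ∈ Finset.univ.erase i, a i j * s j := by
          apply Finset.sum_le_sum
          intro j hj
          exact mul_le_mul_of_nonneg_left
            ((min_le_left _ _).trans (hl j (Finset.mem_univ j)))
            (hann i j (Finset.ne_of_mem_erase hj))
  have hub : ∀ i, (b i - 1) * (1 - S) ≤ b i * s i := by
    intro i
    have h1 := heq i
    have h2 := hsumU i
    nlinarith
  have hlb : ∀ i, b i * s i ≤ (b i - 1) * (1 - m') := by
    intro i
    have h1 := heq i
    have h2 := hsumL i
    nlinarith
  have hS1 : S ≤ 1 := by
    by_contra h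
    push_neg at h
    have hk0 : 0 < s k := by
      by_contra h2
      push_neg at h2
      have : S = 0 := max_eq_right h2
      linarith
    have hSk : S = s k := max_eq_left hk0.le
    -- s l > 1 - S
    have hsl : 1 - S < s l := by
      have h1 := hub l
      have hbl := hb l
      nlinarith
    have hm'gt : 1 - S < m' := lt_min hsl (by linarith)
    have h1 := hlb k
    have hbk := hb k
    nlinarith
  have hml : 0 ≤ s l := by
    by_contra h
    push_neg at h
    have h1 := hub l
    have hbl := hb l
    nlinarith
  have hm'' : m' = 0 := min_eq_right hml
  have hSlt : S < 1 := by
    rcases le_or_gt (s k) 0 with h | h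
    · have : S = 0 := max_eq_right h
      linarith
    · have hSk : S = s k := max_eq_left h.le
      have h1 := hlb k
      rw [hm''] at h1
      have hbk := hb k
      nlinarith
  intro i
  have h1 := hub i
  have hbi := hb i
  nlinarith

theorem bevertonHolt_exactly_one_fixed_point (d : ℕ) (hd : 2 ≤ d)
    (b : Fin d → ℝ) (C : Matrix (Fin d) (Fin d) ℝ)
    (hb : ∀ i, 1 < b i) (hcii : ∀ i, 0 < C i i)
    (hcij : ∀ i j, i ≠ j → 0 ≤ C i j)
    (hweak : ∀ i, ∑ j ∈ Finset.univ.erase i, C i j * b j / C j j ≤ b i - 1)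
    (hC : IsUnit C.det) :
    (∃! x : Fin d → ℝ, (∀ i, 0 < x i) ∧
        ∀ i, b i * x i / (1 + ∑ j, C i j * x j) = x i) ∧
      ∀ x : Fin d → ℝ, (∀ i, 0 < x i) →
        (∀ i, b i * x i / (1 + ∑ j, C i j * x j) = x i) →
        x = C⁻¹.mulVec (fun i => b i - 1) := by
  have : NeZero d := ⟨by omega⟩
  have hbne : ∀ i, b i ≠ 0 := fun i => by have := hb i; linarith
  have hcne : ∀ i, C i i ≠ 0 := fun i => ne_of_gt (hcii i)
  -- the candidate solution
  set y : Fin d → ℝ := C⁻¹.mulVec (fun i => b i - 1) with hydef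
  have hCy : C.mulVec y = fun i => b i - 1 := by
    rw [hydef, Matrix.mulVec_mulVec, Matrix.mul_nonsing_inv _ hC, Matrix.one_mulVec]
  have hy : ∀ i, ∑ j, C i j * y j = b i - 1 := by
    intro i
    have := congrFun hCy i
    simpa [Matrix.mulVec, dotProduct] using this
  -- positivity of y
  have hypos : ∀ i, 0 < y i := by
    have hs := aux_pos d b (fun i j => C i j * b j / C j j) (fun i => C i i * y i / b i)
      hb
      (fun i j hij => div_nonneg (mul_nonneg (hcij i j (Ne.symm hij)) (by linarith [hb j]))
        (hcii j).le)
      hweak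
      (fun i => by
        have h1 : b i * (C i i * y i / b i) = C i i * y i := by
          rw [mul_comm, div_mul_cancel₀ _ (hbne i)]
        have h2 : ∀ j ∈ Finset.univ.erase i,
            C i j * b j / C j j * (C j j * y j / b j) = C i j * y j := by
          intro j _
          field_simp [hbne j, hcne j]
        rw [h1, Finset.sum_congr rfl h2, ← hy i,
          ← Finset.sum_erase_add _ _ (Finset.mem_univ i)]
        ring)
      -- conclusion: for each i, 0 < C i i * y i / b i, hence 0 < y i
    intro i
    have := hs i
    have hbi := hb i
    have hci := hcii i
    by_contra h
    push_neg at h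
    have : C i i * y i / b i ≤ 0 := by
      apply div_nonpos_of_nonpos_of_nonneg
      · exact mul_nonpos_of_nonneg_of_nonpos hci.le h
      · linarith
    linarith [hs i]
  -- y is a fixed point
  have hyfix : ∀ i, b i * y i / (1 + ∑ j, C i j * y j) = y i := by
    intro i
    rw [show (1 + ∑ j, C i j * y j) = b i by linarith [hy i]]
    exact mul_div_cancel_left₀ _ (hbne i)
  -- uniqueness
  have huniq : ∀ x : Fin d → ℝ, (∀ i, 0 < x i) →
      (∀ i, b i * x i / (1 + ∑ j, C i j * x j) = x i) → x = y := by
    intro x hxpos hxfix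
    have hx : ∀ i, ∑ j, C i j * x j = b i - 1 := by
      intro i
      have hD : (0:ℝ) < 1 + ∑ j, C i j * x j := by
        have : (0:ℝ) ≤ ∑ j, C i j * x j := by
          apply Finset.sum_nonneg
          intro j _
          rcases eq_or_ne i j with rfl | hij
          · exact mul_nonneg (hcii i).le (hxpos i).le
          · exact mul_nonneg (hcij i j hij) (hxpos j).le
        linarith
      have h1 := hxfix i
      have h2 : b i * x i = x i * (1 + ∑ j, C i j * x j) := by
        field_simp at h1
        linarith [h1]
      have hxi := (hxpos i).ne'
      have : b i = 1 + ∑ j, C i j * x j := by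
        have := mul_left_cancel₀ hxi (by linarith [h2] : x i * b i = x i * (1 + ∑ j, C i j * x j))
        linarith [this]
      linarith
    have hCx : C.mulVec x = fun i => b i - 1 := by
      funext i
      simpa [Matrix.mulVec, dotProduct] using hx i
    have : C⁻¹.mulVec (C.mulVec x) = x := by
      rw [Matrix.mulVec_mulVec, Matrix.nonsing_inv_mul _ hC, Matrix.one_mulVec]
    rw [← this, hCx]
  exact ⟨⟨y, ⟨hypos, hyfix⟩, fun x hx => huniq x hx.1 hx.2⟩, huniq⟩
end

section
/- With notation as in the rating model (e_{ijk} > 0; μ^x_i, M^x_i the min and max of e_{ijk} over (j,k); μ^y_1, M^y_j defined analogously; all l's nonnegative with l^x_1, l^y_1 > 0), for every point (x,y,z) in the invariant box U defined by the bounds (l^y_j μ^y_1)/(l^y_1 M^y_j) ≤ y_j, one has |∂φ_i/∂y_j| ≤ (l^x_i/l^x_1) · (M^x_1 M^x_i − μ^x_1 μ^x_i)/(μ^x_i)^2 · l^y_1 / (μ^y_1 ∑_{j'} l^y_{j'}/M^y_{j'}). -/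
/-!
Along the line `t ↦ Function.update y j t`, numerator and denominator of `φ_i` are affine in `t`,
with slopes the row sums `r_{i'}(j) = ∑_k e_{i'jk} z_k ∈ [μ^x_{i'} ∑ z, M^x_{i'} ∑ z]`. By the
quotient rule the numerator of the derivative is `∑_{j'} (r_1(j) r_i(j') - r_1(j') r_i(j)) y_{j'}`,
whose coefficients are at most `(M^x_1 M^x_i - μ^x_1 μ^x_i) (∑ z)²` in absolute value, while the
denominator is at least `(μ^x_i ∑ y ∑ z)²`. This bounds the derivative with `1 / ∑ y` as last
factor, and summing the box inequalities gives `μ^y_1 ∑_{j'} l^y_{j'} / M^y_{j'} ≤ l^y_1 ∑ y`.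
-/

open Finset Set

theorem abs_mul_sub_mul_le_of_mem_Icc {u u' v v' μ M ν N : ℝ} (hμ : 0 ≤ μ) (hν : 0 ≤ ν)
    (hu : u ∈ Icc μ M) (hu' : u' ∈ Icc μ M) (hv : v ∈ Icc ν N) (hv' : v' ∈ Icc ν N) :
    |u * v - u' * v'| ≤ M * N - μ * ν := by
  have upper {a b : ℝ} (ha : a ∈ Icc μ M) (hb : b ∈ Icc ν N) : a * b ≤ M * N :=
    mul_le_mul ha.2 hb.2 (hν.trans hb.1) (hμ.trans (ha.1.trans ha.2))
  have lower {a b : ℝ} (ha : a ∈ Icc μ M) (hb : b ∈ Icc ν N) : μ * ν ≤ a * b :=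
    mul_le_mul ha.1 hb.1 hν (hμ.trans ha.1)
  rw [abs_sub_le_iff]
  constructor <;> linarith [upper hu hv, upper hu' hv', lower hu hv, lower hu' hv']

theorem sum_mul_mem_Icc {κ : Type*} (s : Finset κ) {f z : κ → ℝ} {a b : ℝ}
    (hf : ∀ k ∈ s, f k ∈ Icc a b) (hz : ∀ k ∈ s, 0 ≤ z k) :
    ∑ k ∈ s, f k * z k ∈ Icc (a * ∑ k ∈ s, z k) (b * ∑ k ∈ s, z k) := by
  rw [mul_sum, mul_sum]
  exact ⟨sum_le_sum fun k hk => mul_le_mul_of_nonneg_right (hf k hk).1 (hz k hk),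
    sum_le_sum fun k hk => mul_le_mul_of_nonneg_right (hf k hk).2 (hz k hk)⟩

theorem mul_sum_div_le_mul_sum {ι : Type*} (s : Finset ι) {ℓ M y : ι → ℝ} {a μ : ℝ} (ha : 0 < a)
    (hy : ∀ j ∈ s, ℓ j * μ / (a * M j) ≤ y j) :
    μ * ∑ j ∈ s, ℓ j / M j ≤ a * ∑ j ∈ s, y j := by
  rw [mul_sum, mul_sum]
  refine sum_le_sum fun j hj => ?_
  calc μ * (ℓ j / M j) = ℓ j * μ / (a * M j) * a := by field_simp
    _ ≤ y j * a := by gcongr; exact hy j hj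
    _ = a * y j := mul_comm _ _

section

variable {ι κ : Type*} [Fintype ι] [Fintype κ]

theorem sum_sum_mul_mul_eq (w : ι → κ → ℝ) (u : ι → ℝ) (z : κ → ℝ) :
    ∑ j, ∑ k, w j k * u j * z k = ∑ j, (∑ k, w j k * z k) * u j := by
  simp_rw [sum_mul]
  exact sum_congr rfl fun _ _ => sum_congr rfl fun _ _ => by ring

theorem mul_sum_sub_sum_mul_eq (r s y : ι → ℝ) (j : ι) :
    r j * ∑ j', s j' * y j' - (∑ j', r j' * y j') * s j
      = ∑ j', (r j * s j' - r j' * s j) * y j' := by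
  rw [mul_sum, sum_mul, ← sum_sub_distrib]
  exact sum_congr rfl fun _ _ => by ring

theorem hasDerivAt_sum_mul_update [DecidableEq ι] (r y : ι → ℝ) (j : ι) (t : ℝ) :
    HasDerivAt (fun t => ∑ j', r j' * Function.update y j t j') (r j) t := by
  have h := HasDerivAt.fun_sum (u := univ) fun j' _ =>
    (hasDerivAt_pi.mp (hasDerivAt_update y j t) j').const_mul (r j')
  simpa [Pi.single_apply] using h

theorem deriv_div_sum_mul_update [DecidableEq ι] (r s y : ι → ℝ) (j : ι)
    (hs : ∑ j', s j' * y j' ≠ 0) :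
    deriv (fun t => (∑ j', r j' * Function.update y j t j') /
        ∑ j', s j' * Function.update y j t j') (y j)
      = (r j * ∑ j', s j' * y j' - (∑ j', r j' * y j') * s j) / (∑ j', s j' * y j') ^ 2 := by
  have h := (hasDerivAt_sum_mul_update r y j (y j)).fun_div
    (hasDerivAt_sum_mul_update s y j (y j)) (by rwa [Function.update_eq_self])
  rw [h.deriv, Function.update_eq_self]

theorem abs_deriv_div_sum_mul_update_le [DecidableEq ι] (r s y : ι → ℝ) (j : ι) {μ M ν N : ℝ}
    (hμ : 0 ≤ μ) (hν : 0 < ν) (hr : ∀ j, r j ∈ Icc μ M) (hs : ∀ j, s j ∈ Icc ν N)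
    (hy : ∀ j, 0 ≤ y j) (hS : 0 < ∑ j', y j') :
    |deriv (fun t => (∑ j', r j' * Function.update y j t j') /
        ∑ j', s j' * Function.update y j t j') (y j)|
      ≤ (M * N - μ * ν) / (ν ^ 2 * ∑ j', y j') := by
  have hνS : 0 < ν * ∑ j', y j' := mul_pos hν hS
  have hD : ν * ∑ j', y j' ≤ ∑ j', s j' * y j' := by
    rw [mul_sum]
    exact sum_le_sum fun j' _ => mul_le_mul_of_nonneg_right (hs j').1 (hy j')
  have hnum : |r j * ∑ j', s j' * y j' - (∑ j', r j' * y j') * s j|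
      ≤ (M * N - μ * ν) * ∑ j', y j' := by
    rw [mul_sum_sub_sum_mul_eq, mul_sum]
    refine (abs_sum_le_sum_abs _ _).trans (sum_le_sum fun j' _ => ?_)
    rw [abs_mul, abs_of_nonneg (hy j')]
    exact mul_le_mul_of_nonneg_right
      (abs_mul_sub_mul_le_of_mem_Icc hμ hν.le (hr j) (hr j') (hs j') (hs j)) (hy j')
  rw [deriv_div_sum_mul_update r s y j (hνS.trans_le hD).ne', abs_div, abs_pow,
    abs_of_pos (hνS.trans_le hD)]
  calc _ ≤ (M * N - μ * ν) * (∑ j', y j') / (ν * ∑ j', y j') ^ 2 :=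
        div_le_div₀ ((abs_nonneg _).trans hnum) hnum (pow_pos hνS 2) (by gcongr)
    _ = (M * N - μ * ν) / (ν ^ 2 * ∑ j', y j') := by field_simp

theorem abs_deriv_div_sum_sum_mul_update_le [DecidableEq ι] (u v : ι → κ → ℝ) (y : ι → ℝ)
    (z : κ → ℝ) (j : ι) {μ M ν N : ℝ} (hμ : 0 ≤ μ) (hν : 0 < ν)
    (hu : ∀ j k, u j k ∈ Icc μ M) (hv : ∀ j k, v j k ∈ Icc ν N)
    (hy : ∀ j, 0 ≤ y j) (hS : 0 < ∑ j', y j') (hz : ∀ k, 0 ≤ z k) (hT : 0 < ∑ k, z k) :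
    |deriv (fun t => (∑ j', ∑ k, u j' k * Function.update y j t j' * z k) /
        ∑ j', ∑ k, v j' k * Function.update y j t j' * z k) (y j)|
      ≤ (M * N - μ * ν) / (ν ^ 2 * ∑ j', y j') := by
  simp only [sum_sum_mul_mul_eq]
  calc _ ≤ ((M * ∑ k, z k) * (N * ∑ k, z k) - (μ * ∑ k, z k) * (ν * ∑ k, z k)) /
        ((ν * ∑ k, z k) ^ 2 * ∑ j', y j') :=
        abs_deriv_div_sum_mul_update_le _ _ y j (mul_nonneg hμ hT.le) (mul_pos hν hT)
          (fun j' => sum_mul_mem_Icc univ (fun k _ => hu j' k) (fun k _ => hz k))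
          (fun j' => sum_mul_mem_Icc univ (fun k _ => hv j' k) (fun k _ => hz k)) hy hS
    _ = (M * N - μ * ν) / (ν ^ 2 * ∑ j', y j') := by field_simp

end

theorem rating_map_partial_derivative_bound_general (m n p : ℕ)
    (hm : 0 < m) (hn : 0 < n) (hp : 0 < p)
    (e : Fin m → Fin n → Fin p → ℝ) (he : ∀ i j k, 0 < e i j k)
    (lx : Fin m → ℝ) (ly : Fin n → ℝ)
    (hlx : ∀ i, 0 ≤ lx i) (hly : ∀ j, 0 ≤ ly j)
    (hly1 : 0 < ly ⟨0, hn⟩)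
    (μx Mx : Fin m → ℝ) (μy My : Fin n → ℝ)
    (hμx : ∀ i, μx i = Finset.univ.inf'
      (Finset.univ_nonempty_iff.mpr ⟨(⟨0, hn⟩, ⟨0, hp⟩)⟩)
      (fun jk : Fin n × Fin p => e i jk.1 jk.2))
    (hMx : ∀ i, Mx i = Finset.univ.sup'
      (Finset.univ_nonempty_iff.mpr ⟨(⟨0, hn⟩, ⟨0, hp⟩)⟩)
      (fun jk : Fin n × Fin p => e i jk.1 jk.2))
    (hμy : ∀ j, μy j = Finset.univ.inf'
      (Finset.univ_nonempty_iff.mpr ⟨(⟨0, hm⟩, ⟨0, hp⟩)⟩)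
      (fun ik : Fin m × Fin p => e ik.1 j ik.2))
    (hMy : ∀ j, My j = Finset.univ.sup'
      (Finset.univ_nonempty_iff.mpr ⟨(⟨0, hm⟩, ⟨0, hp⟩)⟩)
      (fun ik : Fin m × Fin p => e ik.1 j ik.2))
    (y : Fin n → ℝ) (z : Fin p → ℝ)
    (hy : ∀ j', 0 < y j') (hz : ∀ k, 0 < z k)
    (hybox : ∀ j', ly j' * μy ⟨0, hn⟩ / (ly ⟨0, hn⟩ * My j') ≤ y j')
    (i : Fin m) (j : Fin n) :
    |deriv (fun t : ℝ => lx i / lx ⟨0, hm⟩ *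
        ((∑ j', ∑ k, e ⟨0, hm⟩ j' k * Function.update y j t j' * z k) /
          (∑ j', ∑ k, e i j' k * Function.update y j t j' * z k))) (y j)|
      ≤ lx i / lx ⟨0, hm⟩ *
          ((Mx ⟨0, hm⟩ * Mx i - μx ⟨0, hm⟩ * μx i) / (μx i) ^ 2) *
          (ly ⟨0, hn⟩ / (μy ⟨0, hn⟩ * ∑ j', ly j' / My j')) := by
  set i₁ : Fin m := ⟨0, hm⟩
  set j₁ : Fin n := ⟨0, hn⟩
  have he_mem (i' j' k) : e i' j' k ∈ Icc (μx i') (Mx i') :=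
    ⟨(hμx i').symm ▸ inf'_le (fun jk : Fin n × Fin p => e i' jk.1 jk.2) (mem_univ (j', k)),
      (hMx i').symm ▸ le_sup' (fun jk : Fin n × Fin p => e i' jk.1 jk.2) (mem_univ (j', k))⟩
  have hμM (i') : μx i' ≤ Mx i' := (he_mem i' j₁ ⟨0, hp⟩).1.trans (he_mem i' j₁ ⟨0, hp⟩).2
  have hμx_pos (i') : 0 < μx i' := by rw [hμx, lt_inf'_iff]; exact fun _ _ => he _ _ _
  have hμy_pos : 0 < μy j₁ := by rw [hμy, lt_inf'_iff]; exact fun _ _ => he _ _ _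
  have hMy_pos (j') : 0 < My j' := by
    rw [hMy, lt_sup'_iff]; exact ⟨(i₁, ⟨0, hp⟩), mem_univ _, he _ _ _⟩
  have hS : 0 < ∑ j', y j' := sum_pos (fun j' _ => hy j') ⟨j₁, mem_univ _⟩
  have hL : 0 < ∑ j', ly j' / My j' := sum_pos' (fun j' _ => div_nonneg (hly j') (hMy_pos j').le)
    ⟨j₁, mem_univ _, div_pos hly1 (hMy_pos j₁)⟩
  have hK : 0 ≤ Mx i₁ * Mx i - μx i₁ * μx i := sub_nonneg.2 <|
    mul_le_mul (hμM i₁) (hμM i) (hμx_pos i).le ((hμx_pos i₁).le.trans (hμM i₁))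
  have hS_inv : 1 / ∑ j', y j' ≤ ly j₁ / (μy j₁ * ∑ j', ly j' / My j') := by
    rw [div_le_div_iff₀ hS (mul_pos hμy_pos hL), one_mul]
    exact mul_sum_div_le_mul_sum univ hly1 fun j' _ => hybox j'
  have hc : 0 ≤ lx i / lx i₁ := div_nonneg (hlx i) (hlx i₁)
  rw [deriv_const_mul_field', abs_mul, abs_of_nonneg hc, mul_assoc]
  refine mul_le_mul_of_nonneg_left ?_ hc
  calc _ ≤ (Mx i₁ * Mx i - μx i₁ * μx i) / (μx i ^ 2 * ∑ j', y j') :=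
        abs_deriv_div_sum_sum_mul_update_le _ _ y z j (hμx_pos i₁).le (hμx_pos i)
          (he_mem i₁) (he_mem i) (fun j' => (hy j').le) hS (fun k => (hz k).le)
          (sum_pos (fun k _ => hz k) ⟨⟨0, hp⟩, mem_univ _⟩)
    _ = (Mx i₁ * Mx i - μx i₁ * μx i) / μx i ^ 2 * (1 / ∑ j', y j') := by field_simp
    _ ≤ _ := mul_le_mul_of_nonneg_left hS_inv (div_nonneg hK (sq_nonneg _))

theorem rating_map_partial_derivative_bound (m n p : ℕ)
    (hm : 0 < m) (hn : 0 < n) (hp : 0 < p)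
    (e : Fin m → Fin n → Fin p → ℝ) (he : ∀ i j k, 0 < e i j k)
    (lx : Fin m → ℝ) (ly : Fin n → ℝ)
    (hlx : ∀ i, 0 ≤ lx i) (hly : ∀ j, 0 ≤ ly j)
    (hlx1 : 0 < lx ⟨0, hm⟩) (hly1 : 0 < ly ⟨0, hn⟩)
    (μx Mx : Fin m → ℝ) (μy My : Fin n → ℝ)
    (hμx : ∀ i, μx i = Finset.univ.inf'
      (Finset.univ_nonempty_iff.mpr ⟨(⟨0, hn⟩, ⟨0, hp⟩)⟩)
      (fun jk : Fin n × Fin p => e i jk.1 jk.2))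
    (hMx : ∀ i, Mx i = Finset.univ.sup'
      (Finset.univ_nonempty_iff.mpr ⟨(⟨0, hn⟩, ⟨0, hp⟩)⟩)
      (fun jk : Fin n × Fin p => e i jk.1 jk.2))
    (hμy : ∀ j, μy j = Finset.univ.inf'
      (Finset.univ_nonempty_iff.mpr ⟨(⟨0, hm⟩, ⟨0, hp⟩)⟩)
      (fun ik : Fin m × Fin p => e ik.1 j ik.2))
    (hMy : ∀ j, My j = Finset.univ.sup'
      (Finset.univ_nonempty_iff.mpr ⟨(⟨0, hm⟩, ⟨0, hp⟩)⟩)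
      (fun ik : Fin m × Fin p => e ik.1 j ik.2))
    (y : Fin n → ℝ) (z : Fin p → ℝ)
    (hy : ∀ j', 0 < y j') (hz : ∀ k, 0 < z k)
    (hybox : ∀ j', ly j' * μy ⟨0, hn⟩ / (ly ⟨0, hn⟩ * My j') ≤ y j')
    (i : Fin m) (j : Fin n) :
    |deriv (fun t : ℝ => lx i / lx ⟨0, hm⟩ *
        ((∑ j', ∑ k, e ⟨0, hm⟩ j' k * Function.update y j t j' * z k) /
          (∑ j', ∑ k, e i j' k * Function.update y j t j' * z k))) (y j)|
      ≤ lx i / lx ⟨0, hm⟩ *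
          ((Mx ⟨0, hm⟩ * Mx i - μx ⟨0, hm⟩ * μx i) / (μx i) ^ 2) *
          (ly ⟨0, hn⟩ / (μy ⟨0, hn⟩ * ∑ j', ly j' / My j')) :=
  rating_map_partial_derivative_bound_general m n p hm hn hp e he lx ly hlx hly hly1 μx Mx μy My hμx
    hMx hμy hMy y z hy hz hybox i j
end

section
/- Let d ≥ 2, b_i > 1, c_{ii} > 0, c_{ij} ≥ 0 (i ≠ j), with ∑_{j≠i} c_{ij} b_j/c_{jj} ≤ b_i − 1 for all i, and C = (c_{ij}) invertible. Then for any initial point x^0 in the open positive orthant, the first iterate x^1 = φ(x^0) satisfies x^1_i ≤ b_i/c_{ii} for all i, and all subsequent iterates x^{t} (t ≥ 1) remain in the set {x : 0 < x_i ≤ b_i/c_{ii} for all i}. -/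
theorem bevertonHolt_iterates_invariance (d : ℕ) (hd : 2 ≤ d)
    (b : Fin d → ℝ) (c : Fin d → Fin d → ℝ)
    (hb : ∀ i, 1 < b i) (hcii : ∀ i, 0 < c i i)
    (hcij : ∀ i j, i ≠ j → 0 ≤ c i j)
    (hweak : ∀ i, ∑ j ∈ Finset.univ.erase i, c i j * b j / c j j ≤ b i - 1)
    (hC : IsUnit (Matrix.of c).det)
    (φ : (Fin d → ℝ) → (Fin d → ℝ))
    (hφ : ∀ x i, φ x i = b i * x i /
      (1 + c i i * x i + ∑ j ∈ Finset.univ.erase i, c i j * x j))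
    (x0 : Fin d → ℝ) (hx0 : ∀ i, 0 < x0 i) :
    (∀ i, φ x0 i ≤ b i / c i i) ∧
      ∀ t : ℕ, 1 ≤ t → ∀ i, 0 < φ^[t] x0 i ∧ φ^[t] x0 i ≤ b i / c i i := by
  have key : ∀ x : Fin d → ℝ, (∀ i, 0 < x i) →
      ∀ i, 0 < φ x i ∧ φ x i ≤ b i / c i i := by
    intro x hx i
    have hsum : 0 ≤ ∑ j ∈ Finset.univ.erase i, c i j * x j := by
      apply Finset.sum_nonneg
      intro j hj
      have hji : i ≠ j := fun h => (Finset.mem_erase.mp hj).1 h.symm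
      exact mul_nonneg (hcij i j hji) (hx j).le
    have hD : 0 < 1 + c i i * x i + ∑ j ∈ Finset.univ.erase i, c i j * x j := by
      have := mul_pos (hcii i) (hx i)
      linarith
    have hb0 : 0 < b i := lt_trans one_pos (hb i)
    constructor
    · rw [hφ]
      exact div_pos (mul_pos hb0 (hx i)) hD
    · rw [hφ]
      rw [div_le_div_iff₀ hD (hcii i)]
      have hci : 0 < c i i * x i := mul_pos (hcii i) (hx i)
      have : c i i * x i ≤ 1 + c i i * x i + ∑ j ∈ Finset.univ.erase i, c i j * x j := by
        linarith
      calc b i * x i * c i i = b i * (c i i * x i) := by ring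
        _ ≤ b i * (1 + c i i * x i + ∑ j ∈ Finset.univ.erase i, c i j * x j) :=
            mul_le_mul_of_nonneg_left this hb0.le
  have hposIter : ∀ t : ℕ, ∀ i, 0 < φ^[t] x0 i := by
    intro t
    induction t with
    | zero => simpa using hx0
    | succ n ih =>
      intro i
      rw [Function.iterate_succ_apply']
      exact (key _ ih i).1
  refine ⟨fun i => (key x0 hx0 i).2, fun t ht i => ?_⟩
  obtain ⟨n, rfl⟩ := Nat.exists_eq_add_of_le ht
  rw [add_comm, Function.iterate_succ_apply']
  exact key _ (hposIter n) i
end
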